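/- arXiv:2009.10423 — 3 statements merged into one kernel-verified Lean document; each statement's English description precedes it below -/
import Mathlib

section
/- With w given by the explicit formula w(x,t) = w₀(x) e^{-∫₀ᵗ(v(x,r)-η)dr} / (1 + η w₀(x) ∫₀ᵗ e^{-∫₀ˢ(v(x,r)-η)dr} ds), where w₀ ≥ 0, v ≥ 0, η ≥ 0, one has the two-sided bound (w₀(x)/(1 + w₀(x)(e^{ηt}-1))) e^{-∫₀ᵗ(v(x,r)-η)dr} ≤ w(x,t) ≤ w₀(x) e^{-∫₀ᵗ(v(x,r)-η)dr}, and moreover 0 ≤ w(x,t) ≤ max{1, w₀(x)}. -/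
/-!
Write `V(t) = ∫₀ᵗ v ≥ 0`, so that the exponential factor of the formula is
`e^{ηt} e^{-V(t)}`.
For `0 ≤ s ≤ t` the integrand of the denominator satisfies
`e^{-V(t)} e^{ηs} ≤ e^{ηs - V(s)} ≤ e^{ηs}`, because `V` is nonnegative and nondecreasing.
Integrating, `η ∫₀ᵗ e^{ηs - V(s)} ds` lies between `e^{-V(t)} (e^{ηt} - 1)` and
`e^{ηt} - 1`.
The upper estimate gives the two-sided bound; the lower one bounds `w` by
`u e^{ηt} / (1 + u (e^{ηt} - 1))` with `u = w₀ e^{-V(t)} ≤ w₀`, which is at most `max 1 u`.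
-/

open Real intervalIntegral

lemma mul_integral_exp_mul (η t : ℝ) :
    η * ∫ s in (0:ℝ)..t, exp (η * s) = exp (η * t) - 1 := by
  rw [mul_integral_comp_mul_left, integral_exp, mul_zero, exp_zero]

lemma mul_div_one_add_mul_sub_one_le_max {u q : ℝ} (hu : 0 ≤ u) (hq : 1 ≤ q) :
    u * q / (1 + u * (q - 1)) ≤ max 1 u := by
  have hD : 0 < 1 + u * (q - 1) := by nlinarith
  rw [div_le_iff₀ hD]
  rcases le_total u 1 with hu1 | hu1
  · nlinarith [le_max_left 1 u]
  · have := mul_nonneg (mul_nonneg hu (sub_nonneg.2 hq)) (sub_nonneg.2 hu1)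
    nlinarith [le_max_right 1 u]

lemma mul_div_one_add_mul_bounds {w₀ k q B : ℝ} (hw₀ : 0 ≤ w₀) (hk₀ : 0 ≤ k)
    (hk₁ : k ≤ 1) (hq : 1 ≤ q) (hB_ge : k * (q - 1) ≤ B) (hB_le : B ≤ q - 1) :
    w₀ / (1 + w₀ * (q - 1)) * (k * q) ≤ w₀ * (k * q) / (1 + w₀ * B) ∧
      w₀ * (k * q) / (1 + w₀ * B) ≤ w₀ * (k * q) ∧
      0 ≤ w₀ * (k * q) / (1 + w₀ * B) ∧ w₀ * (k * q) / (1 + w₀ * B) ≤ max 1 w₀ := by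
  have hB : 0 ≤ B := (mul_nonneg hk₀ (sub_nonneg.2 hq)).trans hB_ge
  have hD : 1 ≤ 1 + w₀ * B := le_add_of_nonneg_right (mul_nonneg hw₀ hB)
  refine ⟨?_, div_le_self (by positivity) hD, by positivity, ?_⟩
  · rw [div_mul_eq_mul_div]
    exact div_le_div_of_nonneg_left (by positivity) (by linarith) (by gcongr)
  · calc w₀ * (k * q) / (1 + w₀ * B)
        ≤ w₀ * k * q / (1 + w₀ * k * (q - 1)) := by
          rw [← mul_assoc]
          exact div_le_div_of_nonneg_left (by positivity) (by positivity)
            (by nlinarith [mul_le_mul_of_nonneg_left hB_ge hw₀])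
      _ ≤ max 1 (w₀ * k) := mul_div_one_add_mul_sub_one_le_max (by positivity) hq
      _ ≤ max 1 w₀ := max_le_max le_rfl (mul_le_of_le_one_right hw₀ hk₁)

section NonnegRate

variable {f : ℝ → ℝ} (hf : Continuous f) (η : ℝ)
include hf

lemma integral_sub_const_eq (s : ℝ) :
    ∫ r in (0:ℝ)..s, (f r - η) = (∫ r in (0:ℝ)..s, f r) - η * s := by
  rw [intervalIntegral.integral_sub (hf.intervalIntegrable 0 s) intervalIntegrable_const,
    intervalIntegral.integral_const, smul_eq_mul, sub_zero, mul_comm]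

lemma continuous_exp_neg_integral_sub_const :
    Continuous fun s => exp (-∫ r in (0:ℝ)..s, (f r - η)) :=
  (continuous_primitive (fun a b => (hf.sub continuous_const).intervalIntegrable a b) 0).neg.rexp

variable (hf0 : ∀ r, 0 ≤ f r)
include hf0

lemma exp_neg_integral_sub_const_le {s : ℝ} (hs : 0 ≤ s) :
    exp (-∫ r in (0:ℝ)..s, (f r - η)) ≤ exp (η * s) := by
  have : 0 ≤ ∫ r in (0:ℝ)..s, f r := integral_nonneg hs fun r _ => hf0 r
  rw [integral_sub_const_eq hf, exp_le_exp]
  linarith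

lemma exp_neg_integral_mul_exp_le {s t : ℝ} (hs : 0 ≤ s) (hst : s ≤ t) :
    exp (-∫ r in (0:ℝ)..t, f r) * exp (η * s) ≤ exp (-∫ r in (0:ℝ)..s, (f r - η)) := by
  have : ∫ r in (0:ℝ)..s, f r ≤ ∫ r in (0:ℝ)..t, f r :=
    integral_mono_interval le_rfl hs hst (Filter.Eventually.of_forall hf0)
      (hf.intervalIntegrable 0 t)
  rw [integral_sub_const_eq hf, ← exp_add, exp_le_exp]
  linarith

variable {η} (hη : 0 ≤ η)
include hη

lemma mul_integral_exp_neg_integral_sub_const_le {t : ℝ} (ht : 0 ≤ t) :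
    η * ∫ s in (0:ℝ)..t, exp (-∫ r in (0:ℝ)..s, (f r - η)) ≤ exp (η * t) - 1 := by
  rw [← mul_integral_exp_mul]
  gcongr
  exact integral_mono_on ht
    ((continuous_exp_neg_integral_sub_const hf η).intervalIntegrable 0 t)
    ((by fun_prop : Continuous fun s => exp (η * s)).intervalIntegrable 0 t)
    fun s hs => exp_neg_integral_sub_const_le hf η hf0 hs.1

lemma exp_neg_integral_mul_le_mul_integral {t : ℝ} (ht : 0 ≤ t) :
    exp (-∫ r in (0:ℝ)..t, f r) * (exp (η * t) - 1) ≤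
      η * ∫ s in (0:ℝ)..t, exp (-∫ r in (0:ℝ)..s, (f r - η)) := by
  rw [← mul_integral_exp_mul, mul_left_comm, ← intervalIntegral.integral_const_mul]
  gcongr
  have hlower : Continuous fun s => exp (-∫ r in (0:ℝ)..t, f r) * exp (η * s) := by fun_prop
  exact integral_mono_on ht (hlower.intervalIntegrable 0 t)
    ((continuous_exp_neg_integral_sub_const hf η).intervalIntegrable 0 t)
    fun s hs => exp_neg_integral_mul_exp_le hf η hf0 hs.1 hs.2

end NonnegRate

theorem stmt2_general {X : Type*} (T η : ℝ) (hη : 0 ≤ η)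
    (w v : X → ℝ → ℝ) (w₀ : X → ℝ)
    (hvpos : ∀ x t, 0 ≤ v x t) (hw0 : ∀ x, 0 ≤ w₀ x)
    (hv : ∀ x, Continuous (v x))
    (hw : ∀ x, ∀ t ∈ Set.Ico (0:ℝ) T,
      w x t = w₀ x * Real.exp (-∫ r in (0:ℝ)..t, (v x r - η)) /
        (1 + η * w₀ x * ∫ s in (0:ℝ)..t, Real.exp (-∫ r in (0:ℝ)..s, (v x r - η)))) :
    ∀ x, ∀ t ∈ Set.Ico (0:ℝ) T,
      (w₀ x / (1 + w₀ x * (Real.exp (η * t) - 1))) *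
          Real.exp (-∫ r in (0:ℝ)..t, (v x r - η)) ≤ w x t ∧
      w x t ≤ w₀ x * Real.exp (-∫ r in (0:ℝ)..t, (v x r - η)) ∧
      0 ≤ w x t ∧ w x t ≤ max 1 (w₀ x) := by
  intro x t ht
  have ht0 := ht.1
  have hE : exp (-∫ r in (0:ℝ)..t, (v x r - η)) =
      exp (-∫ r in (0:ℝ)..t, v x r) * exp (η * t) := by
    rw [integral_sub_const_eq (hv x), ← exp_add]
    ring_nf
  rw [hw x t ht, hE, mul_comm η (w₀ x), mul_assoc (w₀ x) η]
  exact mul_div_one_add_mul_bounds (hw0 x) (exp_pos _).le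
    (exp_le_one_iff.2 (neg_nonpos.2 (integral_nonneg ht0 fun r _ => hvpos x r)))
    (one_le_exp (mul_nonneg hη ht0))
    (exp_neg_integral_mul_le_mul_integral (hv x) (hvpos x) hη ht0)
    (mul_integral_exp_neg_integral_sub_const_le (hv x) (hvpos x) hη ht0)

theorem stmt2 {X : Type*} (T η : ℝ) (hT : 0 < T) (hη : 0 ≤ η)
    (w v : X → ℝ → ℝ) (w₀ : X → ℝ)
    (hvpos : ∀ x t, 0 ≤ v x t) (hw0 : ∀ x, 0 ≤ w₀ x)
    (hv : ∀ x, Continuous (v x))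
    (hw : ∀ x, ∀ t ∈ Set.Ico (0:ℝ) T,
      w x t = w₀ x * Real.exp (-∫ r in (0:ℝ)..t, (v x r - η)) /
        (1 + η * w₀ x * ∫ s in (0:ℝ)..t, Real.exp (-∫ r in (0:ℝ)..s, (v x r - η)))) :
    ∀ x, ∀ t ∈ Set.Ico (0:ℝ) T,
      (w₀ x / (1 + w₀ x * (Real.exp (η * t) - 1))) *
          Real.exp (-∫ r in (0:ℝ)..t, (v x r - η)) ≤ w x t ∧
      w x t ≤ w₀ x * Real.exp (-∫ r in (0:ℝ)..t, (v x r - η)) ∧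
      0 ≤ w x t ∧ w x t ≤ max 1 (w₀ x) :=
  stmt2_general T η hη w v w₀ hvpos hw0 hv hw
end

section
/- Let m > 0 and χ > 0 satisfy mχ < 4π. Define ε = (4π - mχ)/(16π m χ) and γ = (√(2π/(4π+mχ)) - 1/2)χ. Then γ > 0, and A := χ/2 - m(1/(8π)+ε)(χ+γ)² = ((4π+mχ)χ/(16π)) (√(2π/(4π+mχ)) - 1/2)(3√(2π/(4π+mχ)) + 1/2) > 0. -/
/-!
With `s = √(2π/(4π+mχ))` we have `γ = (s - 1/2)χ`, and `mχ < 4π` is exactly `1/2 < s`.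
Since `m(1/(8π)+ε) = (4π+mχ)/(16πχ)` and `8π/(4π+mχ) = 4s²`, the coefficient becomes
`(4π+mχ)χ/(16π) · (4s² - (s+1/2)²)`, a difference of squares.
-/

open Real

lemma one_half_lt_sqrt_two_mul_div {p Q : ℝ} (hQ : 0 < Q) (hQp : Q < 8 * p) :
    1 / 2 < √(2 * p / Q) := by
  rw [show (1 : ℝ) / 2 = √((1 / 2) ^ 2) from (sqrt_sq (by norm_num)).symm]
  exact sqrt_lt_sqrt (by norm_num) (by rw [lt_div_iff₀ hQ]; linarith)

lemma mul_inv_eight_add_div {p m χ : ℝ} (hp : p ≠ 0) (hm : m ≠ 0) (hχ : χ ≠ 0) :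
    m * (1 / (8 * p) + (4 * p - m * χ) / (16 * p * m * χ)) = (4 * p + m * χ) / (16 * p * χ) := by
  field_simp
  ring

lemma half_sub_mul_sq_eq {p m χ s : ℝ} (hp : p ≠ 0) (hm : m ≠ 0) (hχ : χ ≠ 0)
    (hs : (4 * p + m * χ) * s ^ 2 = 2 * p) :
    χ / 2 - m * (1 / (8 * p) + (4 * p - m * χ) / (16 * p * m * χ)) * (χ + (s - 1 / 2) * χ) ^ 2 =
      (4 * p + m * χ) * χ / (16 * p) * (s - 1 / 2) * (3 * s + 1 / 2) := by
  rw [mul_inv_eight_add_div hp hm hχ]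
  field_simp
  linear_combination (-16) * hs

theorem stmt4 (m χ : ℝ) (hm : 0 < m) (hχ : 0 < χ) (hmc : m * χ < 4 * π) :
    let ε := (4 * π - m * χ) / (16 * π * m * χ)
    let γ := (Real.sqrt (2 * π / (4 * π + m * χ)) - 1 / 2) * χ
    0 < γ ∧
      χ / 2 - m * (1 / (8 * π) + ε) * (χ + γ) ^ 2 =
        ((4 * π + m * χ) * χ / (16 * π)) *
          (Real.sqrt (2 * π / (4 * π + m * χ)) - 1 / 2) *
          (3 * Real.sqrt (2 * π / (4 * π + m * χ)) + 1 / 2) ∧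
      0 < χ / 2 - m * (1 / (8 * π) + ε) * (χ + γ) ^ 2 := by
  intro ε γ
  have hQ : 0 < 4 * π + m * χ := by positivity
  have hs : (4 * π + m * χ) * √(2 * π / (4 * π + m * χ)) ^ 2 = 2 * π := by
    rw [sq_sqrt (by positivity)]
    field_simp
  have hs_gt : 1 / 2 < √(2 * π / (4 * π + m * χ)) := one_half_lt_sqrt_two_mul_div hQ (by linarith)
  have hA := half_sub_mul_sq_eq pi_ne_zero hm.ne' hχ.ne' hs
  have hs_sub : 0 < √(2 * π / (4 * π + m * χ)) - 1 / 2 := by linarith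
  have hs_add : 0 < 3 * √(2 * π / (4 * π + m * χ)) + 1 / 2 := by linarith
  refine ⟨mul_pos hs_sub hχ, hA, ?_⟩
  rw [hA]
  positivity
end

section
/- Let Ω ⊂ ℝ² be a bounded domain contained in the ball B(0,R), and for ε > 0 define V_ε(x) = (1/χ)[ln(ε²/(ε²+π|x|²)²) - (1/|Ω|)∫_Ω ln(ε²/(ε²+π|y|²)²) dy]. Then ∫_Ω V_ε = 0, and the Dirichlet energy satisfies (χ/2)∫_Ω |∇V_ε|² = (8π²/χ)∫_Ω |x|²/(ε²+π|x|²)² dx ≤ (8π/χ)[ln(ε²+πR²) - 2 ln ε + ε²/(ε²+πR²) - 1]. -/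
/-!
Up to the factor `1 / χ`, `V_ε` is `log (bubble ε)` minus its mean over `Ω`, so it has integral
zero. The gradient of `log (bubble ε)` at `x` is `-4π x / (ε² + π |x|²)`, which gives the energy
identity. For the bound, enlarge `Ω` to `B(0, R)` and pass to polar coordinates: the radial
integrand `r³ / (ε² + π r²)²` has antiderivative `(log (ε² + π r²) + ε² / (ε² + π r²)) / (2π²)`.
-/

open MeasureTheory Real Set Metric

noncomputable def bubble {E : Type*} [NormedAddCommGroup E] (ε : ℝ) (x : E) : ℝ :=
  ε ^ 2 / (ε ^ 2 + π * ‖x‖ ^ 2) ^ 2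

lemma log_bubble {E : Type*} [NormedAddCommGroup E] {ε : ℝ} (hε : ε ≠ 0) (x : E) :
    log (bubble ε x) = 2 * log ε - 2 * log (ε ^ 2 + π * ‖x‖ ^ 2) := by
  rw [bubble, log_div (by positivity) (by positivity), log_pow, log_pow, Nat.cast_ofNat]

section InnerProductSpace

variable {E : Type*} [NormedAddCommGroup E] [InnerProductSpace ℝ E] {ε : ℝ}

lemma hasFDerivAt_log_bubble (hε : ε ≠ 0) (x : E) :
    HasFDerivAt (fun y => log (bubble ε y))
      ((-4 * π / (ε ^ 2 + π * ‖x‖ ^ 2)) • innerSL ℝ x) x := by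
  have hden : HasFDerivAt (fun y : E => ε ^ 2 + π * ‖y‖ ^ 2) (π • (2 • innerSL ℝ x)) x :=
    ((hasStrictFDerivAt_norm_sq x).hasFDerivAt.const_mul π).const_add _
  have hlog := ((hden.log (by positivity)).const_mul 2).const_sub (2 * log ε)
  simp only [← log_bubble hε] at hlog
  refine hlog.congr_fderiv ?_
  ext y
  simp only [neg_apply, smul_apply, smul_eq_mul, nsmul_eq_mul, Nat.cast_ofNat]
  field_simp
  ring

lemma norm_fderiv_log_bubble (hε : ε ≠ 0) (x : E) :
    ‖fderiv ℝ (fun y => log (bubble ε y)) x‖ = 4 * π * ‖x‖ / (ε ^ 2 + π * ‖x‖ ^ 2) := by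
  rw [(hasFDerivAt_log_bubble hε x).fderiv, norm_smul, innerSL_apply_norm, norm_div,
    norm_mul, norm_neg, Real.norm_of_nonneg (by positivity : (0 : ℝ) ≤ 4),
    Real.norm_of_nonneg pi_pos.le, Real.norm_of_nonneg (by positivity)]
  ring

end InnerProductSpace

lemma integral_ball_fun_norm_fin_two {F : Type*} [NormedAddCommGroup F] [NormedSpace ℝ F]
    (f : ℝ → F) {R : ℝ} (hR : 0 ≤ R) :
    ∫ x in ball (0 : EuclideanSpace ℝ (Fin 2)) R, f ‖x‖ = (2 * π) • ∫ r in 0..R, r • f r := by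
  have hind : ∀ x : EuclideanSpace ℝ (Fin 2),
      (ball 0 R).indicator (fun x => f ‖x‖) x = (Iio R).indicator f ‖x‖ := fun x => by
    simp [indicator]
  have hsmul : ∀ r : ℝ,
      r ^ (2 - 1) • (Iio R).indicator f r = (Iio R).indicator (fun r => r • f r) r :=
    fun r => by by_cases hr : r < R <;> simp [hr]
  rw [← integral_indicator measurableSet_ball, funext hind, integral_fun_norm_addHaar,
    finrank_euclideanSpace_fin, funext hsmul, setIntegral_indicator measurableSet_Iio,
    Ioi_inter_Iio, intervalIntegral.integral_of_le hR, integral_Ioc_eq_integral_Ioo,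
    measureReal_def, EuclideanSpace.volume_ball_fin_two]
  simp [ENNReal.toReal_ofReal pi_pos.le, mul_smul, ofNat_smul_eq_nsmul]

lemma integral_mul_sq_div_sq_add_pi_mul_sq {ε : ℝ} (hε : ε ≠ 0) (R : ℝ) :
    ∫ r in 0..R, r * (r ^ 2 / (ε ^ 2 + π * r ^ 2) ^ 2) =
      (log (ε ^ 2 + π * R ^ 2) - 2 * log ε + ε ^ 2 / (ε ^ 2 + π * R ^ 2) - 1) / (2 * π ^ 2) := by
  have hden : ∀ r : ℝ, 0 < ε ^ 2 + π * r ^ 2 := fun r => by positivity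
  have hderiv : ∀ r ∈ uIcc 0 R, HasDerivAt
      (fun r => (log (ε ^ 2 + π * r ^ 2) + ε ^ 2 / (ε ^ 2 + π * r ^ 2)) / (2 * π ^ 2))
      (r * (r ^ 2 / (ε ^ 2 + π * r ^ 2) ^ 2)) r := by
    intro r _
    have hg : HasDerivAt (fun r : ℝ => ε ^ 2 + π * r ^ 2) (π * (2 * r)) r := by
      simpa using ((hasDerivAt_pow 2 r).const_mul π).const_add (ε ^ 2)
    refine (((hg.log (hden r).ne').add ((hg.inv (hden r).ne').const_mul (ε ^ 2))).div_const
      (2 * π ^ 2)).congr_deriv ?_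
    field_simp
    ring
  have hcont : Continuous fun r : ℝ => r * (r ^ 2 / (ε ^ 2 + π * r ^ 2) ^ 2) := by
    fun_prop (disch := exact fun r => (pow_pos (hden r) 2).ne')
  rw [intervalIntegral.integral_eq_sub_of_hasDerivAt hderiv (hcont.intervalIntegrable 0 R),
    zero_pow two_ne_zero, mul_zero, add_zero, div_self (pow_ne_zero 2 hε), log_pow,
    Nat.cast_ofNat]
  ring

lemma setIntegral_ball_sq_norm_div_sq {ε : ℝ} (hε : ε ≠ 0) {R : ℝ} (hR : 0 ≤ R) :
    ∫ x in ball (0 : EuclideanSpace ℝ (Fin 2)) R, ‖x‖ ^ 2 / (ε ^ 2 + π * ‖x‖ ^ 2) ^ 2 =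
      (log (ε ^ 2 + π * R ^ 2) - 2 * log ε + ε ^ 2 / (ε ^ 2 + π * R ^ 2) - 1) / π := by
  rw [integral_ball_fun_norm_fin_two (fun r => r ^ 2 / (ε ^ 2 + π * r ^ 2) ^ 2) hR]
  simp only [smul_eq_mul]
  rw [integral_mul_sq_div_sq_add_pi_mul_sq hε]
  field_simp

lemma setIntegral_sq_norm_div_sq_le_of_subset_ball {ε : ℝ} (hε : ε ≠ 0) {R : ℝ} (hR : 0 ≤ R)
    {Ω : Set (EuclideanSpace ℝ (Fin 2))} (hΩ : Ω ⊆ ball 0 R) :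
    ∫ x in Ω, ‖x‖ ^ 2 / (ε ^ 2 + π * ‖x‖ ^ 2) ^ 2 ≤
      (log (ε ^ 2 + π * R ^ 2) - 2 * log ε + ε ^ 2 / (ε ^ 2 + π * R ^ 2) - 1) / π := by
  have hcont : Continuous fun x : EuclideanSpace ℝ (Fin 2) =>
      ‖x‖ ^ 2 / (ε ^ 2 + π * ‖x‖ ^ 2) ^ 2 := by
    fun_prop (disch := exact fun _ => by positivity)
  rw [← setIntegral_ball_sq_norm_div_sq hε hR]
  exact setIntegral_mono_set
    ((hcont.continuousOn.integrableOn_compact (isCompact_closedBall 0 R)).mono_set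
      ball_subset_closedBall)
    (.of_forall fun x => by positivity) hΩ.eventuallyLE

theorem stmt9_general (χ ε R : ℝ) (hχ : 0 < χ) (hε : 0 < ε) (hR : 0 < R)
    (Ω : Set (EuclideanSpace ℝ (Fin 2)))
    (hΩb : Ω ⊆ Metric.ball 0 R)
    (Vε : EuclideanSpace ℝ (Fin 2) → ℝ)
    (hV : ∀ x, Vε x = (1 / χ) * (Real.log (ε ^ 2 / (ε ^ 2 + π * ‖x‖ ^ 2) ^ 2)
      - (1 / (volume Ω).toReal) *
          ∫ y in Ω, Real.log (ε ^ 2 / (ε ^ 2 + π * ‖y‖ ^ 2) ^ 2))) :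
    (∫ x in Ω, Vε x) = 0 ∧
    (χ / 2) * ∫ x in Ω, ‖fderiv ℝ Vε x‖ ^ 2 =
      (8 * π ^ 2 / χ) * ∫ x in Ω, ‖x‖ ^ 2 / (ε ^ 2 + π * ‖x‖ ^ 2) ^ 2 ∧
    (χ / 2) * ∫ x in Ω, ‖fderiv ℝ Vε x‖ ^ 2 ≤
      (8 * π / χ) * (Real.log (ε ^ 2 + π * R ^ 2) - 2 * Real.log ε
        + ε ^ 2 / (ε ^ 2 + π * R ^ 2) - 1) := by
  have hVε : Vε = fun x => (1 / χ) * (log (bubble ε x) - ⨍ y in Ω, log (bubble ε y)) := by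
    ext x
    rw [hV, setAverage_eq, measureReal_def, smul_eq_mul, one_div (volume Ω).toReal]
    rfl
  have hgrad : ∀ x, ‖fderiv ℝ Vε x‖ ^ 2 =
      16 * π ^ 2 / χ ^ 2 * (‖x‖ ^ 2 / (ε ^ 2 + π * ‖x‖ ^ 2) ^ 2) := fun x => by
    have hdiff := (hasFDerivAt_log_bubble hε.ne' x).differentiableAt
    rw [hVε, fderiv_const_mul (hdiff.sub_const _), fderiv_sub_const, norm_smul,
      norm_fderiv_log_bubble hε.ne', norm_div, norm_one, Real.norm_of_nonneg hχ.le]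
    field_simp
    ring
  have henergy : (χ / 2) * ∫ x in Ω, ‖fderiv ℝ Vε x‖ ^ 2 =
      (8 * π ^ 2 / χ) * ∫ x in Ω, ‖x‖ ^ 2 / (ε ^ 2 + π * ‖x‖ ^ 2) ^ 2 := by
    simp only [hgrad, integral_const_mul]
    field_simp
    ring
  refine ⟨?_, henergy, ?_⟩
  · rw [hVε, integral_const_mul,
      setAverage_sub_setAverage (isBounded_ball.subset hΩb).measure_lt_top.ne, mul_zero]
  calc (χ / 2) * ∫ x in Ω, ‖fderiv ℝ Vε x‖ ^ 2
      ≤ (8 * π ^ 2 / χ) * ((log (ε ^ 2 + π * R ^ 2) - 2 * log ε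
          + ε ^ 2 / (ε ^ 2 + π * R ^ 2) - 1) / π) := by
        rw [henergy]
        gcongr
        exact setIntegral_sq_norm_div_sq_le_of_subset_ball hε.ne' hR.le hΩb
    _ = _ := by field_simp

theorem stmt9 (χ ε R : ℝ) (hχ : 0 < χ) (hε : 0 < ε) (hR : 0 < R)
    (Ω : Set (EuclideanSpace ℝ (Fin 2))) (hΩm : MeasurableSet Ω)
    (hΩb : Ω ⊆ Metric.ball 0 R) (hΩpos : 0 < (volume Ω).toReal)
    (Vε : EuclideanSpace ℝ (Fin 2) → ℝ)
    (hV : ∀ x, Vε x = (1 / χ) * (Real.log (ε ^ 2 / (ε ^ 2 + π * ‖x‖ ^ 2) ^ 2)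
      - (1 / (volume Ω).toReal) *
          ∫ y in Ω, Real.log (ε ^ 2 / (ε ^ 2 + π * ‖y‖ ^ 2) ^ 2))) :
    (∫ x in Ω, Vε x) = 0 ∧
    (χ / 2) * ∫ x in Ω, ‖fderiv ℝ Vε x‖ ^ 2 =
      (8 * π ^ 2 / χ) * ∫ x in Ω, ‖x‖ ^ 2 / (ε ^ 2 + π * ‖x‖ ^ 2) ^ 2 ∧
    (χ / 2) * ∫ x in Ω, ‖fderiv ℝ Vε x‖ ^ 2 ≤
      (8 * π / χ) * (Real.log (ε ^ 2 + π * R ^ 2) - 2 * Real.log ε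
        + ε ^ 2 / (ε ^ 2 + π * R ^ 2) - 1) :=
  stmt9_general χ ε R hχ hε hR Ω hΩb Vε hV
end
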